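/- arXiv:1701.05430 — 3 statements merged into one kernel-verified Lean document; each statement's English description precedes it below -/
import Mathlib

section
/- Let K/k be a purely inseparable extension of characteristic p > 0 such that [K : k(K^p)] is finite. Then the decreasing sequence of fields k(K^{p^n}) for n ∈ ℕ is eventually stationary, and its stable value equals the relative perfect closure rp(K/k), the largest intermediate field M of K/k with M = k(M^p). -/
/-!
Common definitions: purely inseparable extension theory (r-bases, degree of
irrationality, relative perfect closure, modularity), following Fliouet,
"Extensions absolument lq-finies".
-/

open IntermediateField

noncomputable section

/-- `k(K^p)`: the intermediate field of `K/k` generated by the `p`-th powers of `K`. -/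
def pClosure (k K : Type*) [Field k] [Field K] [Algebra k K] (p : ℕ) : IntermediateField k K :=
  adjoin k {x : K | ∃ y : K, y ^ p = x}

/-- `k(K^{p^n})`. -/
def pnClosure (k K : Type*) [Field k] [Field K] [Algebra k K] (p n : ℕ) : IntermediateField k K :=
  adjoin k {x : K | ∃ y : K, y ^ p ^ n = x}

/-- `k(L^p)` for an intermediate field `L` of `Ω/k`. -/
def pClosureOf {k Ω : Type*} [Field k] [Field Ω] [Algebra k Ω] (p : ℕ)
    (L : IntermediateField k Ω) : IntermediateField k Ω :=
  adjoin k {x : Ω | ∃ y ∈ L, y ^ p = x}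

/-- `B` is `r`-free over the intermediate field `L` (typically `L = k(K^p)`):
no `x ∈ B` belongs to `L(B \ {x})`. -/
def RFreeOver {k K : Type*} [Field k] [Field K] [Algebra k K]
    (L : IntermediateField k K) (B : Set K) : Prop :=
  ∀ x ∈ B, x ∉ adjoin L (B \ {x})

/-- `B` is an `r`-basis of `K/k` : `K = k(K^p)(B)` and `B` is `r`-free over `k(K^p)`. -/
def RBasis (k K : Type*) [Field k] [Field K] [Algebra k K] (p : ℕ) (B : Set K) : Prop :=
  adjoin (pClosure k K p) B = ⊤ ∧ RFreeOver (pClosure k K p) B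

/-- `B` is an `r`-basis of `L/F` where `F ≤ L` are intermediate fields of `Ω/k`:
`L = F(L^p)(B)` and no `x ∈ B` lies in `F(L^p)(B \ {x})`. -/
def RBasisRel {k Ω : Type*} [Field k] [Field Ω] [Algebra k Ω] (p : ℕ)
    (F L : IntermediateField k Ω) (B : Set Ω) : Prop :=
  B ⊆ (L : Set Ω) ∧ F ⊔ pClosureOf p L ⊔ adjoin k B = L ∧
    ∀ x ∈ B, x ∉ F ⊔ pClosureOf p L ⊔ adjoin k (B \ {x})

/-- The degree of irrationality of a bounded-exponent extension:
the cardinality of an `r`-basis of `K/k`. -/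
def diCard (k K : Type*) [Field k] [Field K] [Algebra k K] (p : ℕ) : Cardinal :=
  sInf {c : Cardinal | ∃ B : Set K, RBasis k K p B ∧ Cardinal.mk B = c}

/-- `k^{p^{-n}} ∩ K = {x ∈ K | x^{p^n} ∈ k}`. -/
def expleq (k K : Type*) [Field k] [Field K] [Algebra k K] (p n : ℕ) : IntermediateField k K :=
  adjoin k {x : K | x ^ p ^ n ∈ (algebraMap k K).range}

/-- The degree of irrationality `di(K/k) = sup_n di(k^{p^{-n}} ∩ K / k)`. -/
def di (k K : Type*) [Field k] [Field K] [Algebra k K] (p : ℕ) : Cardinal :=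
  ⨆ n : ℕ, diCard k (expleq k K p n) p

/-- The relative perfect closure `rp(K/k)`: the largest intermediate field `L`
with `k(L^p) = L`. -/
def rp (k K : Type*) [Field k] [Field K] [Algebra k K] (p : ℕ) : IntermediateField k K :=
  sSup {L : IntermediateField k K | pClosureOf p L = L}

/-- `K/k` has unbounded exponent. -/
def UnboundedExp (k K : Type*) [Field k] [Field K] [Algebra k K] (p : ℕ) : Prop :=
  ∀ e : ℕ, ∃ x : K, x ^ p ^ e ∉ (algebraMap k K).range

/-- `K^{p^n}` as a subfield of `K`. -/
def pnPowers (K : Type*) [Field K] (p n : ℕ) : Subfield K :=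
  Subfield.closure {x : K | ∃ y : K, y ^ p ^ n = x}

/-- `K/k` is modular: for each `n`, `K^{p^n}` and `k` are linearly disjoint over
`K^{p^n} ∩ k`, i.e. every finite family of elements of `K^{p^n}` that is linearly
independent over `K^{p^n} ∩ k` remains linearly independent over `k`. -/
def Modular (k K : Type*) [Field k] [Field K] [Algebra k K] (p : ℕ) : Prop :=
  ∀ n : ℕ, ∀ s : Finset K, (↑s : Set K) ⊆ (pnPowers K p n : Set K) →
    LinearIndependent ↥(pnPowers K p n ⊓ (algebraMap k K).fieldRange)
      (fun x : s => (x : K)) →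
    LinearIndependent ↥((algebraMap k K).fieldRange) (fun x : s => (x : K))

/-- The exponent `o(a, F)` of `a` over an intermediate field `F`:
the least `m` with `a^{p^m} ∈ F`. -/
def expOf {k K : Type*} [Field k] [Field K] [Algebra k K] (p : ℕ)
    (F : IntermediateField k K) (a : K) : ℕ :=
  sInf {m : ℕ | a ^ p ^ m ∈ F}

/-- An intermediate field `L` of `K/k` is equiexponential of exponent `e` over `k`:
there is an `r`-basis `G` of `L/k` with `o(a, k(G \ {a})) = o(a, k) = e` for all `a ∈ G`. -/
def EquiExpOf {k K : Type*} [Field k] [Field K] [Algebra k K] (p : ℕ)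
    (e : ℕ) (L : IntermediateField k K) : Prop :=
  ∃ G : Set K, RBasisRel p ⊥ L G ∧
    ∀ a ∈ G, expOf p (adjoin k (G \ {a})) a = e ∧ expOf p (⊥ : IntermediateField k K) a = e

end


set_option linter.unusedSectionVars false
section RPAux

variable {p : ℕ} [Fact p.Prime] {k K : Type*} [Field k] [Field K] [Algebra k K] [CharP k p]

private def frobComap (p : ℕ) [Fact p.Prime] [CharP K p] (N : IntermediateField k K) :
    IntermediateField k K :=
  (N.toSubfield.comap (frobenius K p)).toIntermediateField (fun c => by
    show frobenius K p (algebraMap k K c) ∈ N.toSubfield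
    rw [frobenius_def, ← map_pow]
    exact N.algebraMap_mem _)

private lemma mem_frobComap [CharP K p] {N : IntermediateField k K} {x : K} :
    x ∈ frobComap p N ↔ x ^ p ∈ N := Iff.rfl

private lemma pnClosure_zero : pnClosure k K p 0 = ⊤ := by
  rw [pnClosure, eq_top_iff]
  intro x _
  exact subset_adjoin k _ ⟨x, by simp⟩

private lemma pClosure_eq_one : pClosure k K p = pnClosure k K p 1 := by
  simp [pClosure, pnClosure]

private lemma pow_p_mem_succ [CharP K p] {n : ℕ} {x : K} (hx : x ∈ pnClosure k K p n) :
    x ^ p ∈ pnClosure k K p (n + 1) := by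
  have h : pnClosure k K p n ≤ frobComap p (pnClosure k K p (n + 1)) := by
    rw [pnClosure, adjoin_le_iff]
    rintro _ ⟨y, rfl⟩
    rw [SetLike.mem_coe, mem_frobComap]
    exact subset_adjoin k _ ⟨y, by rw [pow_succ, pow_mul]⟩
  exact (mem_frobComap).1 (h hx)

private lemma pClosureOf_le_self {L : IntermediateField k K} : pClosureOf p L ≤ L := by
  rw [pClosureOf, adjoin_le_iff]
  rintro _ ⟨y, hy, rfl⟩
  exact pow_mem hy p

private lemma pClosureOf_mono {L M : IntermediateField k K} (h : L ≤ M) :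
    pClosureOf p L ≤ pClosureOf p M := by
  apply IntermediateField.adjoin.mono
  rintro _ ⟨y, hy, rfl⟩
  exact ⟨y, h hy, rfl⟩

private lemma pClosureOf_pnClosure [CharP K p] (n : ℕ) :
    pClosureOf p (pnClosure k K p n) = pnClosure k K p (n + 1) := by
  apply le_antisymm
  · rw [pClosureOf, adjoin_le_iff]
    rintro _ ⟨y, hy, rfl⟩
    exact pow_p_mem_succ hy
  · rw [pnClosure, adjoin_le_iff]
    rintro _ ⟨y, rfl⟩
    refine subset_adjoin k _ ⟨y ^ p ^ n, subset_adjoin k _ ⟨y, rfl⟩, ?_⟩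
    rw [← pow_mul, ← pow_succ]

private lemma pnClosure_antitone [CharP K p] (n : ℕ) :
    pnClosure k K p (n + 1) ≤ pnClosure k K p n := by
  rw [← pClosureOf_pnClosure]
  exact pClosureOf_le_self

end RPAux

/-- If `K/k` is purely inseparable with `[K : k(K^p)]` finite, then the
decreasing sequence `k(K^{p^n})` is eventually stationary, with stable value the
relative perfect closure `rp(K/k)`. -/
theorem pnClosure_eventually_stationary_eq_rp
    (p : ℕ) [Fact p.Prime] (k K : Type*) [Field k] [Field K] [Algebra k K] [CharP k p]
    [IsPurelyInseparable k K]
    (hfin : FiniteDimensional ↥(pClosure k K p) K) :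
    ∃ n₀ : ℕ, (∀ n ≥ n₀, pnClosure k K p n = pnClosure k K p n₀) ∧
      pnClosure k K p n₀ = rp k K p := by
  haveI : CharP K p := charP_of_injective_algebraMap (algebraMap k K).injective p
  haveI : ExpChar k p := .prime Fact.out
  set F := pClosure k K p with hF
  let b := Module.finBasis F K
  set A : Set K := Set.range ⇑b with hA
  have hgen : ∀ x : K, x ∈ pnClosure k K p 1 ⊔ adjoin k A := by
    intro x
    have hx : x ∈ Submodule.span ↥F A := by
      rw [hA, Module.Basis.span_eq b]; trivial
    have hx2 : x ∈ adjoin F A := by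
      refine Submodule.span_induction (fun y hy => subset_adjoin F A hy) (zero_mem _)
        (fun y z _ _ hy hz => add_mem hy hz) ?_ hx
      intro c y _ hy
      rw [Algebra.smul_def]
      exact mul_mem ((adjoin F A).algebraMap_mem c) hy
    have hr := IntermediateField.restrictScalars_adjoin_eq_sup (F := k) (E := K) F A
    rw [← pClosure_eq_one, ← hF, ← hr]
    exact hx2
  have claim : ∀ n : ℕ, ∀ x : K, x ^ p ^ n ∈
      pnClosure k K p (n + 1) ⊔ adjoin k ((fun a => a ^ p ^ n) '' A) := by
    intro n
    induction n with
    | zero =>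
      intro x
      simpa using hgen x
    | succ n ih =>
      intro x
      have hle : pnClosure k K p (n + 1) ⊔ adjoin k ((fun a => a ^ p ^ n) '' A) ≤
          frobComap p (pnClosure k K p (n + 2) ⊔ adjoin k ((fun a => a ^ p ^ (n + 1)) '' A)) := by
        refine sup_le ?_ ?_
        · intro y hy
          rw [mem_frobComap]
          exact (le_sup_left :
            pnClosure k K p (n + 2) ≤ _) (pow_p_mem_succ hy)
        · rw [adjoin_le_iff]
          rintro _ ⟨a, haA, rfl⟩
          rw [SetLike.mem_coe, mem_frobComap]
          refine (le_sup_right : adjoin k _ ≤ _) (subset_adjoin k _ ⟨a, haA, ?_⟩)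
          rw [← pow_mul, ← pow_succ]
      have h2 := hle (ih x)
      rw [mem_frobComap] at h2
      rwa [← pow_mul, ← pow_succ] at h2
  have key : ∀ n : ℕ, pnClosure k K p n ≤
      pnClosure k K p (n + 1) ⊔ adjoin k ((fun a => a ^ p ^ n) '' A) := by
    intro n
    rw [pnClosure, adjoin_le_iff]
    rintro _ ⟨y, rfl⟩
    exact claim n y
  have hexp : ∀ i, ∃ m : ℕ, (b i) ^ p ^ m ∈ (algebraMap k K).range :=
    fun i => IsPurelyInseparable.pow_mem k p (b i)
  choose e he using hexp
  set n₀ := Finset.univ.sup e with hn₀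
  have hA' : ∀ n, n₀ ≤ n → ∀ a ∈ A, a ^ p ^ n ∈ pnClosure k K p (n + 1) := by
    intro n hn a ha
    obtain ⟨i, rfl⟩ := ha
    obtain ⟨c, hc⟩ := he i
    have hei : e i ≤ n := le_trans (Finset.le_sup (Finset.mem_univ i)) hn
    have hcalc : b i ^ p ^ n = algebraMap k K (c ^ p ^ (n - e i)) := by
      rw [map_pow, hc, ← pow_mul, ← pow_add, Nat.add_sub_cancel' hei]
    rw [hcalc]
    exact (pnClosure k K p (n + 1)).algebraMap_mem _
  have step : ∀ n, n₀ ≤ n → pnClosure k K p n = pnClosure k K p (n + 1) := by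
    intro n hn
    refine le_antisymm ?_ (pnClosure_antitone n)
    refine (key n).trans (sup_le le_rfl ?_)
    rw [adjoin_le_iff]
    rintro _ ⟨a, ha, rfl⟩
    exact hA' n hn a ha
  have stat : ∀ n ≥ n₀, pnClosure k K p n = pnClosure k K p n₀ := by
    intro n hn
    induction n, hn using Nat.le_induction with
    | base => rfl
    | succ n hn ih => rw [← step n hn, ih]
  refine ⟨n₀, stat, ?_⟩
  apply le_antisymm
  · exact le_sSup (show pClosureOf p (pnClosure k K p n₀) = pnClosure k K p n₀ from
      (pClosureOf_pnClosure n₀).trans (step n₀ le_rfl).symm)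
  · refine sSup_le fun L hL => ?_
    have hall : ∀ n : ℕ, L ≤ pnClosure k K p n := by
      intro n
      induction n with
      | zero => rw [pnClosure_zero]; exact le_top
      | succ n ih =>
        rw [← pClosureOf_pnClosure]
        calc L = pClosureOf p L := hL.symm
        _ ≤ pClosureOf p (pnClosure k K p n) := pClosureOf_mono ih
    exact hall n₀
end

section
/- Let K/k be a purely inseparable extension of characteristic p > 0. The following are equivalent: (1) for every intermediate field L of K/k, the extension L/k(L^p) is finite; (2) every decreasing sequence of intermediate fields of K/k is eventually stationary. -/
/-!
(1) ⇒ (2). Let `F` be the intersection of a decreasing chain `(f n)` and `S = {x | x ^ p ∈ F}`.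
Since `k(S^p) ⊆ F ⊆ f n`, the traces `S ∩ f n` form a decreasing chain of intermediate fields of
the finite extension `S / k(S^p)`, constant from some `N` on. Then every `x ∈ f N` with
`x ^ p ∈ F` lies in `F`, and as `K / k` is purely inseparable, climbing up the exponents gives
`f N = F`.

(2) ⇒ (1). If `L / k(L^p)` is infinite, Zorn's lemma and the exchange property of extensions of
exponent one give a maximal `p`-independent subset `B` of `L` over `k(L^p)`; it generates `L`, so
it is infinite, and removing its elements one at a time yields a strictly decreasing chain of
intermediate fields.
-/

/-!
Common definitions: purely inseparable extension theory (r-bases, degree of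
irrationality, relative perfect closure, modularity), following Fliouet,
"Extensions absolument lq-finies".
-/

open IntermediateField

theorem wellFoundedLT_of_antitone_stabilizes {α : Type*} [PartialOrder α]
    (h : ∀ f : ℕ → α, (∀ n, f (n + 1) ≤ f n) → ∃ n₀ : ℕ, ∀ n ≥ n₀, f n = f n₀) :
    WellFoundedLT α := by
  refine (wellFoundedGT_iff_monotone_chain_condition (α := αᵒᵈ)).2 fun a => ?_
  obtain ⟨n₀, hn₀⟩ := h (fun n => OrderDual.ofDual (a n)) fun n => a.mono n.le_succ
  exact ⟨n₀, fun n hn => (hn₀ n hn).symm⟩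

namespace IntermediateField

variable {K L : Type*} [Field K] [Field L] [Algebra K L]

instance wellFoundedLT_of_finiteDimensional [FiniteDimensional K L] :
    WellFoundedLT (IntermediateField K L) :=
  (show StrictMono fun E : IntermediateField K L => Subalgebra.toSubmodule E.toSubalgebra from
    fun _ _ h => h).wellFoundedLT

theorem antitone_stabilizes_of_le (F : IntermediateField K L) [FiniteDimensional F L]
    {g : ℕ → IntermediateField K L} (hg : Antitone g) (hF : ∀ n, F ≤ g n) :
    ∃ N, ∀ n ≥ N, g n = g N := by
  have : WellFoundedLT { E : IntermediateField K L // F ≤ E } :=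
    (extendScalars.orderIso F).strictMono.wellFoundedLT
  obtain ⟨N, hN⟩ := WellFoundedLT.antitone_chain_condition
    (f := fun n => (⟨g n, hF n⟩ : { E : IntermediateField K L // F ≤ E })) fun _ _ h => hg h
  exact ⟨N, fun n hn => congrArg Subtype.val (hN n hn).symm⟩

theorem strictMono_map_val_restrictScalars (M : IntermediateField K L)
    (F : IntermediateField K M) :
    StrictMono fun E : IntermediateField F M => (E.restrictScalars K).map M.val :=
  Monotone.strictMono_of_injective (fun _ _ h => map_mono _ h)
    ((map_injective _).comp (restrictScalars_injective K))

end IntermediateField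

section Descending

variable {k K : Type*} [Field k] [Field K] [Algebra k K] (p : ℕ)

def frobeniusComap [ExpChar K p] (F : IntermediateField k K) : IntermediateField k K :=
  (F.toSubfield.comap (frobenius K p)).toIntermediateField fun c =>
    show algebraMap k K c ^ p ∈ F from pow_mem (F.algebraMap_mem c) p

theorem mem_frobeniusComap [ExpChar K p] {F : IntermediateField k K} {x : K} :
    x ∈ frobeniusComap p F ↔ x ^ p ∈ F :=
  Iff.rfl

variable {p}

theorem pClosure_le_comap_val {S E : IntermediateField k K} (h : ∀ y ∈ S, y ^ p ∈ E) :
    pClosure k S p ≤ E.comap S.val :=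
  adjoin_le_iff.2 <| by
    rintro _ ⟨y, rfl⟩
    exact h y y.2

theorem le_of_pow_mem_imp_mem {E F : IntermediateField k K}
    (hroot : ∀ x ∈ E, x ^ p ∈ F → x ∈ F) (hexp : ∀ x : K, ∃ m, x ^ p ^ m ∈ F) : E ≤ F := by
  suffices ∀ m, ∀ x ∈ E, x ^ p ^ m ∈ F → x ∈ F from fun x hx =>
    (hexp x).elim fun m hm => this m x hx hm
  intro m
  induction m with
  | zero => simp
  | succ m ih =>
    intro x hx hm
    refine ih x hx (hroot _ (pow_mem hx _) ?_)
    rwa [← pow_mul, ← pow_succ]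

theorem antitone_stabilizes_of_forall_finiteDimensional_pClosure [ExpChar k p]
    [IsPurelyInseparable k K]
    (hfin : ∀ L : IntermediateField k K, FiniteDimensional (pClosure k L p) L)
    {f : ℕ → IntermediateField k K} (hf : Antitone f) : ∃ N, ∀ n ≥ N, f n = f N := by
  have : ExpChar K p := expChar_of_injective_algebraMap (algebraMap k K).injective p
  set F := ⨅ n, f n
  set S := frobeniusComap p F
  have hFf : ∀ n, F ≤ f n := iInf_le f
  have hSpow : ∀ n, ∀ y ∈ S, y ^ p ∈ f n := fun n y hy => hFf n ((mem_frobeniusComap p).1 hy)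
  obtain ⟨N, hN⟩ := antitone_stabilizes_of_le (pClosure k S p)
    (g := fun n => (f n).comap S.val) (fun _ _ h _ hx => hf h hx)
    fun n => pClosure_le_comap_val (hSpow n)
  have hroot : ∀ x ∈ f N, x ^ p ∈ F → x ∈ F := by
    intro x hx hxp
    rw [← SetLike.mem_coe, coe_iInf, Set.mem_iInter]
    intro n
    rcases le_total N n with hn | hn
    · have : (⟨x, (mem_frobeniusComap p).2 hxp⟩ : S) ∈ (f N).comap S.val := hx
      rw [← hN n hn] at this
      exact this
    · exact hf hn hx
  have hexp : ∀ x : K, ∃ m, x ^ p ^ m ∈ F := fun x =>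
    (IsPurelyInseparable.pow_mem k p x).imp fun _ ⟨c, hc⟩ => hc ▸ F.algebraMap_mem c
  exact ⟨N, fun n hn =>
    le_antisymm (hf hn) ((le_of_pow_mem_imp_mem hroot hexp).trans (hFf n))⟩

end Descending

section Exchange

open Polynomial

variable {F E : Type*} [Field F] [Field E] [Algebra F E] {p : ℕ} [hp : Fact p.Prime] [CharP E p]
  {x y : E}

theorem finrank_adjoin_simple_of_pow_mem (hx : x ^ p ∈ (algebraMap F E).range)
    (hxF : x ∉ (algebraMap F E).range) : Module.finrank F F⟮x⟯ = p := by
  obtain ⟨c, hc⟩ := hx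
  have hmonic := monic_X_pow_sub_C c hp.out.ne_zero
  have hirr : Irreducible (X ^ p - C c) := by
    refine X_pow_sub_C_irreducible_of_prime hp.out fun b hb => hxF ⟨b, ?_⟩
    have : (algebraMap F E b - x) ^ p = 0 := by rw [sub_pow_char, ← map_pow, hb, hc, sub_self]
    rwa [pow_eq_zero_iff hp.out.ne_zero, sub_eq_zero] at this
  have hmin : minpoly F x = X ^ p - C c :=
    (minpoly.eq_of_irreducible_of_monic hirr (by simp [hc]) hmonic).symm
  rw [adjoin.finrank (minpoly.ne_zero_iff.1 (hmin ▸ hmonic.ne_zero)), hmin,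
    natDegree_X_pow_sub_C]

/-- Exchange property of `p`-independence in exponent one. -/
theorem mem_adjoin_simple_comm_of_pow_mem (hx : x ^ p ∈ (algebraMap F E).range)
    (hy : y ^ p ∈ (algebraMap F E).range) (hxF : x ∉ (algebraMap F E).range)
    (hxy : x ∈ F⟮y⟯) : y ∈ F⟮x⟯ := by
  have hyF : y ∉ (algebraMap F E).range := fun h =>
    hxF <| mem_bot.1 <| adjoin_simple_le_iff.2 (mem_bot.2 h) hxy
  have : FiniteDimensional F F⟮y⟯ :=
    Module.finite_of_finrank_pos (finrank_adjoin_simple_of_pow_mem hy hyF ▸ hp.out.pos)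
  have heq : F⟮x⟯ = F⟮y⟯ := eq_of_le_of_finrank_le (adjoin_simple_le_iff.2 hxy) <| by
    rw [finrank_adjoin_simple_of_pow_mem hx hxF, finrank_adjoin_simple_of_pow_mem hy hyF]
  exact heq ▸ mem_adjoin_simple_self F y

end Exchange

section RFree

variable {k E : Type*} [Field k] [Field E] [Algebra k E] {F : IntermediateField k E}

theorem rFreeOver_sUnion_of_isChain {c : Set (Set E)} (hc : ∀ B ∈ c, RFreeOver F B)
    (hchain : IsChain (· ⊆ ·) c) : RFreeOver F (⋃₀ c) := by
  rintro x ⟨B₁, hB₁, hxB₁⟩ hx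
  obtain ⟨T, hTc, hxT⟩ := exists_finset_of_mem_adjoin hx
  obtain ⟨B₀, hB₀, hTB₀⟩ := hchain.directedOn.exists_mem_subset_of_finite_of_subset_sUnion
    ⟨B₁, hB₁⟩ (T.finite_toSet.insert x)
    (Set.insert_subset ⟨B₁, hB₁, hxB₁⟩ fun t ht => (hTc ht).1)
  refine hc B₀ hB₀ x (hTB₀ (Set.mem_insert x _)) (adjoin.mono _ _ _ ?_ hxT)
  exact fun t ht => ⟨hTB₀ (Set.mem_insert_of_mem x ht), (hTc ht).2⟩

theorem not_wellFoundedLT_of_infinite_rFreeOver {B : Set E} (hB : B.Infinite)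
    (hfree : RFreeOver F B) : ¬WellFoundedLT (IntermediateField F E) := by
  intro _
  let g : ℕ → E := fun n => hB.natEmbedding B n
  have hgB n : g n ∈ B := (hB.natEmbedding B n).2
  have hg : g.Injective := Subtype.val_injective.comp (hB.natEmbedding B).injective
  refine not_strictAnti_of_wellFoundedLT (fun n => adjoin F (g '' Set.Ici n))
    (strictAnti_nat_of_succ_lt fun n => lt_of_le_of_ne
      (adjoin.mono _ _ _ (Set.image_mono (Set.Ici_subset_Ici.2 n.le_succ))) fun h => ?_)
  have hgn : g n ∈ adjoin F (g '' Set.Ici (n + 1)) :=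
    h ▸ subset_adjoin F _ ⟨n, Set.self_mem_Ici, rfl⟩
  refine hfree (g n) (hgB n) (adjoin.mono _ _ _ ?_ hgn)
  rintro _ ⟨m, hm, rfl⟩
  exact ⟨hgB m, fun h => (Nat.succ_le_iff.1 hm).ne' (hg h)⟩

variable {p : ℕ} [Fact p.Prime] [CharP E p]

theorem adjoin_eq_top_of_maximal_rFreeOver (hpow : ∀ x : E, x ^ p ∈ F) {B : Set E}
    (hB : Maximal (RFreeOver F) B) : adjoin F B = ⊤ := by
  have hrange : ∀ (M : IntermediateField F E) (x : E), x ^ p ∈ (algebraMap M E).range :=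
    fun M x => ⟨⟨x ^ p, M.algebraMap_mem ⟨x ^ p, hpow x⟩⟩, rfl⟩
  refine eq_top_iff.2 fun y _ => by_contra fun hy => ?_
  have hyB : y ∉ B := fun h => hy (subset_adjoin F B h)
  refine hyB (hB.2 (fun x hx hxy => ?_) (Set.subset_insert y B) (Set.mem_insert y B))
  rcases hx with rfl | hxB
  · rw [Set.insert_sdiff_self_of_notMem hyB] at hxy
    exact hy hxy
  · have hxy' : x ≠ y := fun h => hyB (h ▸ hxB)
    set M := adjoin F (B \ {x})
    have hxM : x ∈ M⟮y⟯ := by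
      rw [Set.insert_sdiff_of_notMem _ (Set.mem_singleton_iff.not.2 hxy'.symm)] at hxy
      rwa [← mem_restrictScalars F, adjoin_adjoin_left, Set.union_singleton]
    have hxM' : x ∉ (algebraMap M E).range := fun ⟨z, hz⟩ => hB.1 x hxB (hz ▸ z.2 : x ∈ M)
    have hyM : y ∈ M⟮x⟯ := mem_adjoin_simple_comm_of_pow_mem (hrange M x) (hrange M y) hxM' hxM
    rw [← mem_restrictScalars F, adjoin_adjoin_left, Set.union_singleton,
      Set.insert_sdiff_singleton, Set.insert_eq_of_mem hxB] at hyM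
    exact hy hyM

theorem exists_infinite_rFreeOver (hpow : ∀ x : E, x ^ p ∈ F) (hinf : ¬FiniteDimensional F E) :
    ∃ B : Set E, B.Infinite ∧ RFreeOver F B := by
  obtain ⟨B, hB⟩ := zorn_subset {B : Set E | RFreeOver F B} fun c hc hchain =>
    ⟨⋃₀ c, rFreeOver_sUnion_of_isChain hc hchain, fun _ => Set.subset_sUnion_of_mem⟩
  refine ⟨B, fun hfin => hinf ?_, hB.1⟩
  have : Finite B := hfin.to_subtype
  have : FiniteDimensional F (adjoin F B) := finiteDimensional_adjoin fun x _ =>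
    IsIntegral.of_pow (Fact.out : p.Prime).pos (isIntegral_algebraMap (x := (⟨x ^ p, hpow x⟩ : F)))
  rw [adjoin_eq_top_of_maximal_rFreeOver hpow hB] at this
  exact topEquiv.toLinearEquiv.finiteDimensional

theorem finiteDimensional_of_wellFoundedLT [WellFoundedLT (IntermediateField F E)]
    (hpow : ∀ x : E, x ^ p ∈ F) : FiniteDimensional F E :=
  by_contra fun hinf =>
    let ⟨_, hB, hfree⟩ := exists_infinite_rFreeOver hpow hinf
    not_wellFoundedLT_of_infinite_rFreeOver hB hfree ‹_›

end RFree

/-- For a purely inseparable extension `K/k`, the following are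
equivalent: (1) `L/k(L^p)` is finite for every intermediate field `L`;
(2) every decreasing sequence of intermediate fields of `K/k` is stationary. -/
theorem absolutely_lqFinite_iff_descending_stationary
    (p : ℕ) [Fact p.Prime] (k K : Type*) [Field k] [Field K] [Algebra k K] [CharP k p]
    [IsPurelyInseparable k K] :
    (∀ L : IntermediateField k K, FiniteDimensional ↥(pClosure k ↥L p) ↥L) ↔
      (∀ f : ℕ → IntermediateField k K, (∀ n, f (n + 1) ≤ f n) →
        ∃ n₀ : ℕ, ∀ n ≥ n₀, f n = f n₀) := by
  refine ⟨fun hfin f hf => antitone_stabilizes_of_forall_finiteDimensional_pClosure hfin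
    (antitone_nat_of_succ_le hf), fun hdcc L => ?_⟩
  have : WellFoundedLT (IntermediateField k K) := wellFoundedLT_of_antitone_stabilizes hdcc
  have : WellFoundedLT (IntermediateField (pClosure k L p) L) :=
    (strictMono_map_val_restrictScalars L _).wellFoundedLT
  have : CharP L p := charP_of_injective_algebraMap (algebraMap k L).injective p
  exact finiteDimensional_of_wellFoundedLT fun x => subset_adjoin k _ ⟨x, rfl⟩
end

section
/- Let K/k be an lq-finite purely inseparable extension of characteristic p > 0 of unbounded exponent. Then the set of intermediate fields L of K/k with L/k of unbounded exponent, ordered by reverse inclusion, is inductive (every chain has an upper bound); consequently K/k admits a minimal subextension M/k of unbounded exponent, and this M/k is relatively perfect. -/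
/-!
Common definitions: purely inseparable extension theory (r-bases, degree of
irrationality, relative perfect closure, modularity), following Fliouet,
"Extensions absolument lq-finies".
-/

open IntermediateField

/-!
A chain of intermediate fields of unbounded exponent is bounded below by its infimum: for each
`e`, the traces `L ∩ (k^{p^{-(e+1)}} ∩ K)` of the members form a chain of subspaces of a
finite-dimensional space, so one of them is contained in all the others, and it contains an
element of exponent exactly `e + 1` (a suitable `p`-power of an element of large exponent).
Zorn's lemma then gives a minimal `M`, and `M` is relatively perfect because `k(M^p) ⊆ M` still
has unbounded exponent.
-/

section

variable {k K : Type*} [Field k] [Field K] [Algebra k K]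

theorem pow_pow_mem_of_le {S : Type*} [SetLike S K] [SubmonoidClass S K] {s : S} {x : K}
    {p m e : ℕ} (h : x ^ p ^ m ∈ s) (hme : m ≤ e) : x ^ p ^ e ∈ s := by
  rw [← Nat.sub_add_cancel hme, pow_add, mul_comm, pow_mul]
  exact pow_mem h _

variable (p : ℕ)

def HasUnboundedExp (L : IntermediateField k K) : Prop :=
  ∀ e : ℕ, ∃ x ∈ L, x ^ p ^ e ∉ (algebraMap k K).range

theorem hasUnboundedExp_top (hub : UnboundedExp k K p) :
    HasUnboundedExp p (⊤ : IntermediateField k K) :=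
  fun e => let ⟨x, hx⟩ := hub e; ⟨x, mem_top, hx⟩

theorem pClosureOf_le (L : IntermediateField k K) : pClosureOf p L ≤ L :=
  adjoin_le_iff.2 fun _ ⟨_, hy, hx⟩ => hx ▸ pow_mem hy p

theorem HasUnboundedExp.pClosureOf {L : IntermediateField k K} (hL : HasUnboundedExp p L) :
    HasUnboundedExp p (pClosureOf p L) := fun e =>
  let ⟨x, hx, hxe⟩ := hL (e + 1)
  ⟨x ^ p, subset_adjoin _ _ ⟨x, hx, rfl⟩, by rwa [← pow_mul, ← pow_succ']⟩

/-- If `x ∈ L` has exponent `m > e` over `k`, then `x ^ p ^ (m - (e + 1))` has exponent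
`e + 1`. -/
theorem exists_mem_inf_expleq [ExpChar k p] [IsPurelyInseparable k K] {L : IntermediateField k K}
    {e : ℕ} {x : K} (hx : x ∈ L) (hxe : x ^ p ^ e ∉ (algebraMap k K).range) :
    ∃ y ∈ L ⊓ expleq k K p (e + 1), y ^ p ^ e ∉ (algebraMap k K).range := by
  classical
  have hex : ∃ m, x ^ p ^ m ∈ (algebraMap k K).range := IsPurelyInseparable.pow_mem k p x
  set m := Nat.find hex
  have hm : x ^ p ^ m ∈ (algebraMap k K).range := Nat.find_spec hex
  have hem : e < m := lt_of_not_ge fun hme => hxe (pow_pow_mem_of_le hm hme)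
  refine ⟨x ^ p ^ (m - (e + 1)), ⟨pow_mem hx _, subset_adjoin _ _ ?_⟩, ?_⟩
  · rwa [Set.mem_ofPred_eq, ← pow_mul, ← pow_add, Nat.sub_add_cancel hem]
  · rw [← pow_mul, ← pow_add]
    exact Nat.find_min hex (by omega)

theorem IntermediateField.finiteDimensional_of_le {F E : IntermediateField k K}
    [hE : FiniteDimensional k E] (h : F ≤ E) : FiniteDimensional k F :=
  haveI : FiniteDimensional k (Subalgebra.toSubmodule E.toSubalgebra) := hE
  Submodule.finiteDimensional_of_le
    (show Subalgebra.toSubmodule F.toSubalgebra ≤ Subalgebra.toSubmodule E.toSubalgebra from h)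

theorem IsChain.exists_inf_le_sInf {C : Set (IntermediateField k K)} (hC : IsChain (· ≤ ·) C)
    (hne : C.Nonempty) (E : IntermediateField k K) [FiniteDimensional k E] :
    ∃ L₀ ∈ C, L₀ ⊓ E ≤ sInf C := by
  obtain ⟨L₀, hL₀, hmin⟩ :=
    (measure fun L : IntermediateField k K => Module.finrank k ↥(L ⊓ E)).wf.has_min C hne
  refine ⟨L₀, hL₀, le_sInf fun L hL => ?_⟩
  rcases hC.total hL₀ hL with h | h
  · exact inf_le_left.trans h
  · have := finiteDimensional_of_le (inf_le_right : L₀ ⊓ E ≤ E)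
    have htrace : L ⊓ E = L₀ ⊓ E :=
      eq_of_le_of_finrank_le (inf_le_inf_right E h) (_root_.not_lt.1 (hmin L hL))
    exact htrace ▸ inf_le_left

theorem HasUnboundedExp.sInf_of_isChain [ExpChar k p] [IsPurelyInseparable k K]
    (hlq : ∀ n : ℕ, FiniteDimensional k ↥(expleq k K p n)) (hub : UnboundedExp k K p)
    {C : Set (IntermediateField k K)} (hCu : C ⊆ {L | HasUnboundedExp p L})
    (hC : IsChain (· ≤ ·) C) : HasUnboundedExp p (sInf C) := by
  rcases C.eq_empty_or_nonempty with rfl | hne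
  · simpa only [sInf_empty] using hasUnboundedExp_top p hub
  intro e
  have := hlq (e + 1)
  obtain ⟨L₀, hL₀, htrace⟩ := hC.exists_inf_le_sInf hne (expleq k K p (e + 1))
  obtain ⟨x, hx, hxe⟩ := hCu hL₀ e
  obtain ⟨y, hy, hye⟩ := exists_mem_inf_expleq p hx hxe
  exact ⟨y, htrace hy, hye⟩

theorem exists_minimal_hasUnboundedExp [ExpChar k p] [IsPurelyInseparable k K]
    (hlq : ∀ n : ℕ, FiniteDimensional k ↥(expleq k K p n)) (hub : UnboundedExp k K p) :
    ∃ M : IntermediateField k K, Minimal (HasUnboundedExp p) M :=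
  @zorn_le₀ (IntermediateField k K)ᵒᵈ _ {L | HasUnboundedExp p L} fun _ hCu hC =>
    ⟨_, HasUnboundedExp.sInf_of_isChain p hlq hub hCu hC.symm,
      fun _ hL => @sInf_le (IntermediateField k K) _ _ _ hL⟩

theorem Minimal.pClosureOf_eq {M : IntermediateField k K} (hM : Minimal (HasUnboundedExp p) M) :
    pClosureOf p M = M :=
  (pClosureOf_le p M).antisymm (hM.2 (hM.1.pClosureOf p) (pClosureOf_le p M))

end

/-- For an `lq`-finite purely inseparable extension of unbounded
exponent, the set of intermediate fields of unbounded exponent over `k`, ordered by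
reverse inclusion, is inductive; hence there is a minimal such field, and it is
relatively perfect over `k`. -/
theorem lqFinite_unbounded_inductive_minimal_relPerfect
    (p : ℕ) [Fact p.Prime] (k K : Type*) [Field k] [Field K] [Algebra k K] [CharP k p]
    [IsPurelyInseparable k K]
    (hlq : ∀ n : ℕ, FiniteDimensional k ↥(expleq k K p n))
    (hub : UnboundedExp k K p) :
    (∀ C : Set (IntermediateField k K),
        C ⊆ {L | ∀ e : ℕ, ∃ x ∈ L, x ^ p ^ e ∉ (algebraMap k K).range} →
        IsChain (· ≤ ·) C →
        ∃ M : IntermediateField k K,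
          (∀ e : ℕ, ∃ x ∈ M, x ^ p ^ e ∉ (algebraMap k K).range) ∧
          ∀ L ∈ C, M ≤ L) ∧
      ∃ M : IntermediateField k K,
        Minimal (fun L : IntermediateField k K =>
          ∀ e : ℕ, ∃ x ∈ L, x ^ p ^ e ∉ (algebraMap k K).range) M ∧
        pClosureOf p M = M := by
  have : ExpChar k p := ExpChar.prime Fact.out
  obtain ⟨M, hM⟩ := exists_minimal_hasUnboundedExp p hlq hub
  exact ⟨fun C hCu hC => ⟨sInf C, HasUnboundedExp.sInf_of_isChain p hlq hub hCu hC,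
    fun _ hL => sInf_le hL⟩, M, hM, hM.pClosureOf_eq p⟩
end
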